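/- Let (L,*) be a loop with involution and M = D(L,*,γ). Then all associators of M lie in Z(L) if and only if L is central-by-abelian (i.e., all commutators and associators of L are central in L). -/

import Mathlib

universe u

class Loop (L : Type u) extends Mul L, One L where
  ldiv : L → L → L
  rdiv : L → L → L
  mul_ldiv : ∀ a b : L, a * ldiv a b = b
  ldiv_mul : ∀ a b : L, ldiv a (a * b) = b
  rdiv_mul : ∀ a b : L, rdiv b a * a = b
  mul_rdiv : ∀ a b : L, rdiv (b * a) a = b
  one_mul : ∀ a : L, 1 * a = a
  mul_one : ∀ a : L, a * 1 = a

section Magma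
variable {M : Type u} (mul : M → M → M)

/-- Left nucleus of a magma. -/
def leftNucS : Set M := {a | ∀ x y, mul (mul a x) y = mul a (mul x y)}
/-- Middle nucleus of a magma. -/
def midNucS : Set M := {a | ∀ x y, mul (mul x a) y = mul x (mul a y)}
/-- Right nucleus of a magma. -/
def rightNucS : Set M := {a | ∀ x y, mul (mul x y) a = mul x (mul y a)}
/-- Nucleus of a magma. -/
def nucS : Set M := leftNucS mul ∩ midNucS mul ∩ rightNucS mul
/-- Commutant (commutative center) of a magma. -/
def commutantS : Set M := {a | ∀ x, mul a x = mul x a}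
/-- Center of a magma: the commutant intersected with the nucleus. -/
def centerS : Set M := commutantS mul ∩ nucS mul
end Magma

namespace Loop
variable {L : Type u} [Loop L]

/-- The left inverse `a^λ`, satisfying `a^λ * a = 1`. -/
def linv (a : L) : L := Loop.rdiv 1 a
/-- The right inverse `a^ρ`, satisfying `a * a^ρ = 1`. -/
def rinv (a : L) : L := Loop.ldiv a 1
/-- The commutator `[a,b]`, defined by `a*b = (b*a)*[a,b]`. -/
def comm (a b : L) : L := Loop.ldiv (b*a) (a*b)
/-- The associator `[a,b,c]`, defined by `(a*b)*c = (a*(b*c))*[a,b,c]`. -/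
def assoc (a b c : L) : L := Loop.ldiv (a*(b*c)) ((a*b)*c)

end Loop

/-- The nucleus of a loop. -/
abbrev LNuc (L : Type u) [Loop L] : Set L := nucS (fun x y : L => x * y)
/-- The commutant of a loop. -/
abbrev LCommutant (L : Type u) [Loop L] : Set L := commutantS (fun x y : L => x * y)
/-- The center of a loop. -/
abbrev LCenter (L : Type u) [Loop L] : Set L := centerS (fun x y : L => x * y)

/-- Multiplication of the Cayley–Dickson double `D(L,*,γ) = L ∪ Lj`,
encoded on `L × Bool` with `(a, false) = a` and `(a, true) = a·j`. -/
def CDmul {L : Type u} [Loop L] (star : L → L) (γ : L) :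
    L × Bool → L × Bool → L × Bool
  | (a, false), (b, false) => (a * b, false)
  | (a, false), (b, true)  => (b * a, true)
  | (a, true),  (b, false) => (a * star b, true)
  | (a, true),  (b, true)  => (γ * (star b * a), false)

/-! Modulo `Z(L)`, the `L`-part of a product in `M = D(L,*,γ)` is a product of the factors or of
their stars, and `γ` is central. So if `L/Z(L)` is an abelian group, both bracketings of a triple
in `M` agree modulo `Z(L)`, and their associator, the element `k` with `x(yz)·k = (xy)z`, is
central. Conversely, the associators of `M` at `(a, b, c)` and at `(a, b, j)` are `[a, b, c]` and
the star of `[a, b]`, and the star of an element is central only if the element is. -/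

namespace Loop
variable {L : Type u} [Loop L]

theorem mul_left_cancel {a b c : L} (h : a * b = a * c) : b = c := by
  simpa only [Loop.ldiv_mul] using congrArg (Loop.ldiv a) h

theorem mem_center_iff {z : L} : z ∈ LCenter L ↔
    (∀ x : L, z * x = x * z) ∧ (∀ x y : L, (z * x) * y = z * (x * y)) ∧
      (∀ x y : L, (x * z) * y = x * (z * y)) ∧ (∀ x y : L, (x * y) * z = x * (y * z)) :=
  ⟨fun ⟨hc, ⟨hl, hm⟩, hr⟩ => ⟨hc, hl, hm, hr⟩, fun ⟨hc, hl, hm, hr⟩ => ⟨hc, ⟨hl, hm⟩, hr⟩⟩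

theorem one_mem_center : (1 : L) ∈ LCenter L :=
  mem_center_iff.mpr
    ⟨fun x => by rw [Loop.one_mul, Loop.mul_one], fun x y => by rw [Loop.one_mul, Loop.one_mul],
      fun x y => by rw [Loop.mul_one, Loop.one_mul], fun x y => by rw [Loop.mul_one, Loop.mul_one]⟩

theorem mul_mem_center {z w : L} (hz : z ∈ LCenter L) (hw : w ∈ LCenter L) :
    z * w ∈ LCenter L := by
  obtain ⟨zc, zl, zm, zr⟩ := mem_center_iff.mp hz
  obtain ⟨wc, wl, wm, wr⟩ := mem_center_iff.mp hw
  refine mem_center_iff.mpr ⟨fun x => ?_, fun x y => ?_, fun x y => ?_, fun x y => ?_⟩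
  · calc (z * w) * x = (z * x) * w := by rw [zl, wc, zl]
      _ = x * (z * w) := by rw [zc, wr]
  · rw [zl, zl, wl, zl]
  · rw [← wr, wm, zm, zl]
  · rw [← wr, zr, wr, wr]

theorem exists_inv_mem_center {z : L} (hz : z ∈ LCenter L) :
    ∃ w ∈ LCenter L, z * w = 1 := by
  obtain ⟨zc, zl, zm, zr⟩ := mem_center_iff.mp hz
  set w := Loop.ldiv z 1
  have hzw : z * w = 1 := Loop.mul_ldiv z 1
  have hwz : w * z = 1 := by rw [← zc w, hzw]
  -- Each law for `w` follows from the same law for `z` after cancelling `z` on the left.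
  have wc : ∀ x : L, w * x = x * w := fun x => mul_left_cancel <| by
    rw [← zl w x, hzw, Loop.one_mul, ← zl x w, zc, zm, hzw, Loop.mul_one]
  have wl : ∀ x y : L, (w * x) * y = w * (x * y) := fun x y => mul_left_cancel <| by
    rw [← zl (w * x) y, ← zl w x, hzw, Loop.one_mul, ← zl w (x * y), hzw, Loop.one_mul]
  have wr : ∀ x y : L, (x * y) * w = x * (y * w) := fun x y => mul_left_cancel <| by
    rw [zc ((x * y) * w), zr (x * y) w, hwz, Loop.mul_one, zc (x * (y * w)), zr x (y * w),
      zr y w, hwz, Loop.mul_one]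
  have wm : ∀ x y : L, (x * w) * y = x * (w * y) := fun x y => by
    rw [← wc x, wl x y, wc (x * y), wr x y, ← wc y]
  exact ⟨w, mem_center_iff.mpr ⟨wc, wl, wm, wr⟩, hzw⟩

theorem star_mem_center {star : L → L} (hstar2 : ∀ a : L, star (star a) = a)
    (hanti : ∀ a b : L, star (a * b) = star b * star a) {z : L} (hz : z ∈ LCenter L) :
    star z ∈ LCenter L := by
  obtain ⟨zc, zl, zm, zr⟩ := mem_center_iff.mp hz
  -- An anti-automorphism exchanges the left and right nuclei and fixes the middle one.
  have sc : ∀ x : L, star z * x = x * star z := fun x => by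
    rw [← hstar2 x, ← hanti, ← zc, hanti]
  have sl : ∀ x y : L, (star z * x) * y = star z * (x * y) := fun x y => by
    calc (star z * x) * y = star (star y * (star x * z)) := by rw [hanti, hanti, hstar2, hstar2]
      _ = star ((star y * star x) * z) := by rw [zr]
      _ = star z * (x * y) := by rw [hanti, ← hanti x y, hstar2]
  have sr : ∀ x y : L, (x * y) * star z = x * (y * star z) := fun x y => by
    calc (x * y) * star z = star (z * star (x * y)) := by rw [hanti, hstar2]
      _ = star ((z * star y) * star x) := by rw [hanti x y, zl]
      _ = x * (y * star z) := by rw [hanti, hanti, hstar2, hstar2]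
  have sm : ∀ x y : L, (x * star z) * y = x * (star z * y) := fun x y => by
    rw [← sc x, sl x y, sc (x * y), sr x y, ← sc y]
  exact mem_center_iff.mpr ⟨sc, sl, sm, sr⟩

theorem star_mem_center_iff {star : L → L} (hstar2 : ∀ a : L, star (star a) = a)
    (hanti : ∀ a b : L, star (a * b) = star b * star a) {z : L} :
    star z ∈ LCenter L ↔ z ∈ LCenter L :=
  ⟨fun h => hstar2 z ▸ star_mem_center hstar2 hanti h, star_mem_center hstar2 hanti⟩

def IsCentralByAbelian (L : Type u) [Loop L] : Prop :=
  (∀ a b : L, Loop.comm a b ∈ LCenter L) ∧ (∀ a b c : L, Loop.assoc a b c ∈ LCenter L)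

instance centerSetoid : Setoid L where
  r a b := ∃ z ∈ LCenter L, b = a * z
  iseqv.refl a := ⟨1, one_mem_center, (Loop.mul_one a).symm⟩
  iseqv.symm := by
    rintro a _ ⟨z, hz, rfl⟩
    obtain ⟨w, hw, hzw⟩ := exists_inv_mem_center hz
    exact ⟨w, hw, by rw [(mem_center_iff.mp hw).2.2.2 a z, hzw, Loop.mul_one]⟩
  iseqv.trans := by
    rintro a _ _ ⟨z, hz, rfl⟩ ⟨w, hw, rfl⟩
    exact ⟨z * w, mul_mem_center hz hw, (mem_center_iff.mp hw).2.2.2 a z⟩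

theorem mul_congr_mod_center {a a' b b' : L} (ha : a ≈ a') (hb : b ≈ b') : a * b ≈ a' * b' := by
  obtain ⟨z, hz, rfl⟩ := ha
  obtain ⟨w, hw, rfl⟩ := hb
  obtain ⟨zc, -, zm, zr⟩ := mem_center_iff.mp hz
  have wr := (mem_center_iff.mp hw).2.2.2
  refine ⟨z * w, mul_mem_center hz hw, ?_⟩
  calc (a * z) * (b * w) = ((a * z) * b) * w := (wr _ _).symm
    _ = ((a * b) * z) * w := by rw [zm a b, zc b, ← zr a b]
    _ = (a * b) * (z * w) := wr _ _

abbrev CenterQuotient (L : Type u) [Loop L] : Type u := Quotient (centerSetoid (L := L))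

namespace CenterQuotient

instance : Mul (CenterQuotient L) :=
  ⟨Quotient.map₂ (· * ·) fun _ _ ha _ _ hb => mul_congr_mod_center ha hb⟩

instance : One (CenterQuotient L) := ⟨⟦1⟧⟩

theorem mk_mul (a b : L) : (⟦a * b⟧ : CenterQuotient L) = ⟦a⟧ * ⟦b⟧ := rfl

theorem mk_mul_of_mem_center (a : L) {z : L} (hz : z ∈ LCenter L) :
    (⟦a * z⟧ : CenterQuotient L) = ⟦a⟧ :=
  (Quotient.sound (⟨z, hz, rfl⟩ : a ≈ a * z)).symm

theorem mk_eq_one {z : L} (hz : z ∈ LCenter L) : (⟦z⟧ : CenterQuotient L) = 1 := by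
  rw [← Loop.one_mul z, mk_mul_of_mem_center 1 hz]
  rfl

theorem mem_center_of_mul_eq {a b d : L} (hab : (⟦a⟧ : CenterQuotient L) = ⟦b⟧)
    (h : a * d = b) : d ∈ LCenter L := by
  obtain ⟨z, hz, rfl⟩ := Quotient.exact hab
  rwa [mul_left_cancel h]

abbrev commMonoid (hL : IsCentralByAbelian L) : CommMonoid (CenterQuotient L) where
  mul_assoc := by
    rintro ⟨a⟩ ⟨b⟩ ⟨c⟩
    show (⟦(a * b) * c⟧ : CenterQuotient L) = ⟦a * (b * c)⟧
    rw [← Loop.mul_ldiv (a * (b * c)) ((a * b) * c)]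
    exact mk_mul_of_mem_center _ (hL.2 a b c)
  one_mul := by
    rintro ⟨a⟩
    exact congrArg _ (Loop.one_mul a)
  mul_one := by
    rintro ⟨a⟩
    exact congrArg _ (Loop.mul_one a)
  mul_comm := by
    rintro ⟨a⟩ ⟨b⟩
    show (⟦a * b⟧ : CenterQuotient L) = ⟦b * a⟧
    rw [← Loop.mul_ldiv (b * a) (a * b)]
    exact mk_mul_of_mem_center _ (hL.1 a b)

end CenterQuotient

end Loop

section CayleyDickson
open Loop CenterQuotient
variable {L : Type u} [Loop L] {star : L → L} {γ : L}

local infixl:70 " ⋆ " => CDmul star γ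

variable (star γ) in
def CDAssociatorsInCenter : Prop :=
  ∀ x y z k : L × Bool, (x ⋆ (y ⋆ z)) ⋆ k = (x ⋆ y) ⋆ z → ∃ c ∈ LCenter L, k = (c, false)

variable (hstar2 : ∀ a : L, star (star a) = a) (hanti : ∀ a b : L, star (a * b) = star b * star a)
include hstar2 hanti

theorem isCentralByAbelian_of_cdAssociatorsInCenter (H : CDAssociatorsInCenter star γ) :
    IsCentralByAbelian L := by
  refine ⟨fun a b => ?_, fun a b c => ?_⟩
  -- The associator of `M` at `(a, b, j)` is the star of the commutator `[a, b]`.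
  · obtain ⟨c, hc, ⟨⟩⟩ := H (a, false) (b, false) (1, true) (star (Loop.comm a b), false) <| by
      simp only [CDmul, Loop.one_mul, hstar2, Loop.comm, Loop.mul_ldiv]
    exact (star_mem_center_iff hstar2 hanti).mp hc
  · obtain ⟨c, hc, ⟨⟩⟩ := H (a, false) (b, false) (c, false) (Loop.assoc a b c, false) <| by
      simp only [CDmul, Loop.assoc, Loop.mul_ldiv]
    exact hc

theorem cdmul_assoc_mod_center (hL : IsCentralByAbelian L) (hγ : γ ∈ LCenter L)
    (x y z : L × Bool) :
    ((x ⋆ y) ⋆ z).2 = (x ⋆ (y ⋆ z)).2 ∧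
      (⟦((x ⋆ y) ⋆ z).1⟧ : CenterQuotient L) = ⟦(x ⋆ (y ⋆ z)).1⟧ := by
  let _ := commMonoid hL
  have hγ₁ := mk_eq_one hγ
  have hγ₂ := mk_eq_one (star_mem_center hstar2 hanti hγ)
  obtain ⟨a, _ | _⟩ := x <;> obtain ⟨b, _ | _⟩ := y <;> obtain ⟨c, _ | _⟩ := z <;>
    simp only [CDmul, hanti, hstar2, mk_mul, hγ₁, hγ₂] <;> ac_rfl

theorem exists_mem_center_of_cdmul_eq {p q k : L × Bool} (h2 : p.2 = q.2)
    (h1 : (⟦p.1⟧ : CenterQuotient L) = ⟦q.1⟧) (h : p ⋆ k = q) :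
    ∃ c ∈ LCenter L, k = (c, false) := by
  obtain ⟨A, s⟩ := p
  obtain ⟨B, s'⟩ := q
  obtain ⟨d, t⟩ := k
  obtain rfl : s = s' := h2
  cases s <;> cases t <;> simp only [CDmul, Prod.mk.injEq, and_true, and_false, reduceCtorEq] at h
  · exact ⟨d, mem_center_of_mul_eq h1 h, rfl⟩
  · exact ⟨d, (star_mem_center_iff hstar2 hanti).mp (mem_center_of_mul_eq h1 h), rfl⟩

theorem cdAssociatorsInCenter_of_isCentralByAbelian (hL : IsCentralByAbelian L)
    (hγ : γ ∈ LCenter L) : CDAssociatorsInCenter star γ := fun x y z _ h =>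
  have hxyz := cdmul_assoc_mod_center hstar2 hanti hL hγ x y z
  exists_mem_center_of_cdmul_eq hstar2 hanti hxyz.1.symm hxyz.2.symm h

end CayleyDickson

/-- All associators of `M = D(L,*,γ)` lie in `Z(L)` iff `L` is
central-by-abelian. -/
theorem stmt17 {L : Type u} [Loop L] (star : L → L)
    (hstar2 : ∀ a : L, star (star a) = a)
    (hanti : ∀ a b : L, star (a * b) = star b * star a)
    (γ : L) (hγ : γ ∈ LCenter L) :
    (∀ (x y z : L × Bool) (k : L × Bool),
        CDmul star γ (CDmul star γ x (CDmul star γ y z)) k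
          = CDmul star γ (CDmul star γ x y) z →
        ∃ c ∈ LCenter L, k = (c, false)) ↔
      ((∀ a b : L, Loop.comm a b ∈ LCenter L) ∧
       (∀ a b c : L, Loop.assoc a b c ∈ LCenter L)) :=
  ⟨isCentralByAbelian_of_cdAssociatorsInCenter hstar2 hanti,
    fun hL => cdAssociatorsInCenter_of_isCentralByAbelian hstar2 hanti hL hγ⟩
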